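/- arXiv:1903.06102 — 2 statements merged into one kernel-verified Lean document; each statement's English description precedes it below -/
import Mathlib

section
/- The set of elements of D+K with finite spectrum is norm dense in D+K; moreover self-adjoint elements with finite spectrum are dense in the self-adjoint part of D+K (D+K has real rank zero). -/
open scoped InnerProductSpace
open ContinuousLinearMap

variable {H : Type*} [NormedAddCommGroup H] [InnerProductSpace ℂ H] [CompleteSpace H]

/-- An operator is diagonal with respect to the fixed orthonormal (Hilbert) basis `e`. -/
def IsDiagonal (e : HilbertBasis ℕ ℂ H) (T : H →L[ℂ] H) : Prop :=
  ∀ n m : ℕ, n ≠ m → ⟪e m, T (e n)⟫_ℂ = 0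

/-- The set `D + K` of sums of a diagonal operator and a compact operator. -/
def DplusK (e : HilbertBasis ℕ ℂ H) : Set (H →L[ℂ] H) :=
  {T | ∃ D K : H →L[ℂ] H, IsDiagonal e D ∧ IsCompactOperator ⇑K ∧ T = D + K}

/-! Write `T = D + K` and let `F_n` project onto `span {e_0, …, e_{n-1}}`. For large `n` both
`(1 - F_n) K` and `K (1 - F_n)` are small, so `T` is close to `F_n T F_n + (1 - F_n) D`.
Rounding the diagonal entries of `(1 - F_n) D` to a grid `δ (ℤ + i ℤ)` (to `δ ℤ` in the
self-adjoint case, where the imaginary parts of the tail entries are already small) gives an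
operator in `D + K` with finite spectrum: it leaves the finite-dimensional range of `F_n`
invariant and is diagonal with finitely many distinct entries on its complement, so it is
annihilated by a nonzero polynomial. -/

open Filter Topology Polynomial ComplexConjugate

theorem spectrum_finite_of_aeval_eq_zero {𝕜 A : Type*} [Field 𝕜] [Ring A] [Algebra 𝕜 A]
    {a : A} {p : 𝕜[X]} (hp : p ≠ 0) (ha : aeval a p = 0) : (spectrum 𝕜 a).Finite := by
  nontriviality A
  refine (p.finite_setOfPred_isRoot hp).subset fun z hz => ?_
  have := spectrum.subset_polynomial_aeval a p ⟨z, hz, rfl⟩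
  rwa [ha, spectrum.zero_eq, Set.mem_singleton_iff] at this

theorem Module.End.aeval_charpoly_restrict_apply_of_mem {K M : Type*} [Field K] [AddCommGroup M]
    [Module K M] {f : Module.End K M} {V : Submodule K M} [FiniteDimensional K V]
    (hV : ∀ x ∈ V, f x ∈ V) {x : M} (hx : x ∈ V) : aeval f (f.restrict hV).charpoly x = 0 := by
  have h : Function.Semiconj Subtype.val (f.restrict hV) f := fun _ => rfl
  have key : (aeval (f.restrict hV) (f.restrict hV).charpoly ⟨x, hx⟩ : M) =
      aeval f (f.restrict hV).charpoly x := by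
    simp [aeval_eq_sum_range, Module.End.pow_apply, (h.iterate_right _).eq]
  rw [← key, LinearMap.aeval_self_charpoly]
  rfl

theorem ContinuousLinearMap.aeval_toLinearMap_apply {R M : Type*} [CommRing R] [AddCommGroup M]
    [Module R M] [TopologicalSpace M] [IsTopologicalAddGroup M] [ContinuousConstSMul R M]
    (T : M →L[R] M) (p : R[X]) (x : M) : aeval (T : Module.End R M) p x = aeval T p x := by
  simp [aeval_eq_sum_range, Module.End.pow_apply]

theorem Set.Finite.range_indicator {α β : Type*} [Zero β] {f : α → β} (hf : (Set.range f).Finite)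
    (t : Set α) : (Set.range (t.indicator f)).Finite :=
  (hf.insert 0).subset <| Set.range_subset_iff.2 fun a => by
    by_cases ha : a ∈ t <;> simp [ha]

theorem norm_mul_sq_le_of_isSelfAdjoint {A : Type*} [NonUnitalNormedRing A] [StarRing A]
    [CStarRing A] {k q : A} (hq : IsSelfAdjoint q) (hq1 : ‖q‖ ≤ 1) :
    ‖k * q‖ ^ 2 ≤ ‖q * (star k * k)‖ :=
  calc ‖k * q‖ ^ 2 = ‖q * (star k * k) * q‖ := by
        rw [sq, ← CStarRing.norm_star_mul_self, star_mul, hq.star_eq, mul_assoc, mul_assoc,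
          mul_assoc]
    _ ≤ ‖q * (star k * k)‖ * ‖q‖ := norm_mul_le _ _
    _ ≤ ‖q * (star k * k)‖ := mul_le_of_le_one_right (norm_nonneg _) hq1

theorem IsCompactOperator.tendsto_comp_of_tendsto_apply {ι 𝕜 E F G : Type*} [RCLike 𝕜]
    [NormedAddCommGroup E] [NormedSpace 𝕜 E] [NormedAddCommGroup F] [NormedSpace 𝕜 F]
    [NormedAddCommGroup G] [NormedSpace 𝕜 G] {K : E →L[𝕜] F} (hK : IsCompactOperator K)
    {l : Filter ι} {P : ι → F →L[𝕜] G} {C : ℝ} (hPC : ∀ i, ‖P i‖ ≤ C)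
    (hP : ∀ y, Tendsto (fun i => P i y) l (𝓝 0)) : Tendsto (fun i => P i ∘L K) l (𝓝 0) := by
  rw [NormedAddGroup.tendsto_nhds_zero]
  intro ε hε
  obtain ⟨S, hS, hKS⟩ := hK.image_closedBall_subset_compact 1
  have hr : 0 < ε / (4 * (|C| + 1)) := by positivity
  obtain ⟨t, -, htf, hSt⟩ := finite_cover_balls_of_compact hS hr
  have hnear : ∀ᶠ i in l, ∀ y ∈ t, ‖P i y‖ < ε / 2 := htf.eventually_all.2 fun y _ =>
    (NormedAddGroup.tendsto_nhds_zero.1 (hP y)) _ (by positivity)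
  filter_upwards [hnear] with i hi
  have hbound : ∀ z ∈ S, ‖P i z‖ ≤ 3 * ε / 4 := by
    intro z hz
    obtain ⟨y, hyt, hzy⟩ := Set.mem_iUnion₂.1 (hSt hz)
    have hCr : C * ‖z - y‖ ≤ ε / 4 := by
      calc C * ‖z - y‖ ≤ (|C| + 1) * (ε / (4 * (|C| + 1))) := by
            gcongr
            · exact (le_abs_self C).trans (by linarith)
            · exact (mem_ball_iff_norm.1 hzy).le
        _ = ε / 4 := by field_simp
    calc ‖P i z‖ ≤ ‖P i (z - y)‖ + ‖P i y‖ := by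
          simpa using norm_add_le (P i (z - y)) (P i y)
      _ ≤ C * ‖z - y‖ + ε / 2 := add_le_add (((P i).le_opNorm _).trans
          (mul_le_mul_of_nonneg_right (hPC i) (norm_nonneg _))) (hi y hyt).le
      _ ≤ 3 * ε / 4 := by linarith
  have hPK : ‖P i ∘L K‖ ≤ 3 * ε / 4 := opNorm_le_of_unit_norm (by positivity) fun x hx =>
    hbound (K x) (hKS ⟨x, by simp [hx], rfl⟩)
  linarith

theorem Memℓp.mul_of_bddAbove {ι 𝕜 : Type*} [RCLike 𝕜] {p : ENNReal} {s f : ι → 𝕜}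
    (hf : Memℓp f p) (hs : BddAbove (Set.range fun i => ‖s i‖)) :
    Memℓp (fun i => s i * f i) p := by
  obtain ⟨C, hC⟩ := hs
  exact (hf.norm.const_mul C).mono fun i =>
    (norm_mul_le _ _).trans (mul_le_mul_of_nonneg_right (hC ⟨i, rfl⟩) (norm_nonneg _))

theorem lp.norm_mul_le {ι 𝕜 : Type*} [RCLike 𝕜] {p : ENNReal} [Fact (1 ≤ p)] {s : ι → 𝕜}
    {C : ℝ} (hC0 : 0 ≤ C) (hC : ∀ i, ‖s i‖ ≤ C) (f : lp (fun _ : ι => 𝕜) p)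
    (hsf : Memℓp (fun i => s i * f i) p) :
    ‖(⟨fun i => s i * f i, hsf⟩ : lp (fun _ : ι => 𝕜) p)‖ ≤ C * ‖f‖ := by
  have hp : p ≠ 0 := (zero_lt_one.trans_le Fact.out).ne'
  calc _ ≤ ‖(C : 𝕜) • f‖ := lp.norm_mono hp fun i => by
          simpa [norm_smul, abs_of_nonneg hC0] using
            mul_le_mul_of_nonneg_right (hC i) (norm_nonneg (f i))
    _ = C * ‖f‖ := by rw [lp.norm_const_smul hp, RCLike.norm_ofReal, abs_of_nonneg hC0]

noncomputable def gridRound (δ : ℝ) (z : ℂ) : ℂ := δ * (⌊z.re / δ⌋ + ⌊z.im / δ⌋ * Complex.I)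

@[simp] theorem gridRound_re (δ : ℝ) (z : ℂ) : (gridRound δ z).re = δ * ⌊z.re / δ⌋ := by
  simp [gridRound]

@[simp] theorem gridRound_im (δ : ℝ) (z : ℂ) : (gridRound δ z).im = δ * ⌊z.im / δ⌋ := by
  simp [gridRound]

theorem abs_sub_mul_floor_div_le {δ : ℝ} (hδ : 0 < δ) (x : ℝ) : |x - δ * ⌊x / δ⌋| ≤ δ := by
  rw [mul_comm, abs_of_nonneg (Int.sub_floor_div_mul_nonneg x hδ)]
  exact (Int.sub_floor_div_mul_lt x hδ).le

theorem norm_sub_gridRound_le {δ : ℝ} (hδ : 0 < δ) (z : ℂ) : ‖z - gridRound δ z‖ ≤ 2 * δ := by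
  refine (Complex.norm_le_abs_re_add_abs_im _).trans ?_
  simp only [Complex.sub_re, Complex.sub_im, gridRound_re, gridRound_im]
  linarith [abs_sub_mul_floor_div_le hδ z.re, abs_sub_mul_floor_div_le hδ z.im]

theorem norm_sub_re_gridRound_le {δ : ℝ} (hδ : 0 < δ) (z : ℂ) :
    ‖z - ((gridRound δ z).re : ℂ)‖ ≤ δ + |z.im| := by
  refine (Complex.norm_le_abs_re_add_abs_im _).trans ?_
  simpa using abs_sub_mul_floor_div_le hδ z.re

theorem finite_image_gridRound {δ : ℝ} (hδ : 0 < δ) {S : Set ℂ} (hS : Bornology.IsBounded S) :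
    (gridRound δ '' S).Finite := by
  obtain ⟨M, hM⟩ := hS.subset_closedBall 0
  have hfloor : ∀ x : ℝ, |x| ≤ M → ⌊x / δ⌋ ∈ Set.Icc ⌊-M / δ⌋ ⌊M / δ⌋ := fun x hx =>
    ⟨Int.floor_mono (by gcongr; exact neg_le_of_abs_le hx),
      Int.floor_mono (by gcongr; exact le_of_abs_le hx)⟩
  refine (((Set.finite_Icc ⌊-M / δ⌋ ⌊M / δ⌋).prod (Set.finite_Icc ⌊-M / δ⌋ ⌊M / δ⌋)).image
    fun m : ℤ × ℤ => (δ : ℂ) * (m.1 + m.2 * Complex.I)).subset ?_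
  rintro _ ⟨z, hz, rfl⟩
  have hzM : ‖z‖ ≤ M := mem_closedBall_zero_iff.1 (hM hz)
  exact ⟨(⌊z.re / δ⌋, ⌊z.im / δ⌋), ⟨hfloor _ ((Complex.abs_re_le_norm z).trans hzM),
    hfloor _ ((Complex.abs_im_le_norm z).trans hzM)⟩, rfl⟩

namespace HilbertBasis

section Diagonal

variable {ι 𝕜 E : Type*} [RCLike 𝕜] [NormedAddCommGroup E] [InnerProductSpace 𝕜 E]
  (e : HilbertBasis ι 𝕜 E)

theorem ext_continuousLinearMap {A B : E →L[𝕜] E} (h : ∀ i, A (e i) = B (e i)) : A = B :=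
  ContinuousLinearMap.ext_on (Submodule.dense_iff_topologicalClosure_eq_top.mpr e.dense_span)
    (by rintro _ ⟨i, rfl⟩; exact h i)

theorem norm_inner_apply_basis_le (T : E →L[𝕜] E) (i : ι) : ‖⟪e i, T (e i)⟫_𝕜‖ ≤ ‖T‖ :=
  calc ‖⟪e i, T (e i)⟫_𝕜‖ ≤ ‖e i‖ * ‖T (e i)‖ := norm_inner_le_norm _ _
    _ ≤ ‖T‖ := by simpa [e.orthonormal.1 i] using T.le_opNorm (e i)

noncomputable def diagonal (s : ι → 𝕜) (hs : BddAbove (Set.range fun i => ‖s i‖)) :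
    E →L[𝕜] E :=
  LinearMap.mkContinuousOfExistsBound
    { toFun x := e.repr.symm ⟨fun i => s i * e.repr x i, (lp.memℓp (e.repr x)).mul_of_bddAbove hs⟩
      map_add' x y := by
        rw [← map_add]; congr 1; ext i
        simp only [map_add, lp.coeFn_add, Pi.add_apply, mul_add]
      map_smul' c x := by
        rw [← map_smul]; congr 1; ext i; simp [mul_left_comm] }
    (by
      obtain ⟨C, hC⟩ := hs
      exact ⟨max C 0, fun x => by
        simpa using lp.norm_mul_le (le_max_right C 0)
          (fun i => (hC ⟨i, rfl⟩).trans (le_max_left C 0)) (e.repr x) _⟩)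

theorem repr_diagonal_apply {s : ι → 𝕜} {hs : BddAbove (Set.range fun i => ‖s i‖)} (x : E)
    (i : ι) : e.repr (e.diagonal s hs x) i = s i * e.repr x i := by
  simp [diagonal]

theorem diagonal_apply_basis {s : ι → 𝕜} {hs : BddAbove (Set.range fun i => ‖s i‖)} (i : ι) :
    e.diagonal s hs (e i) = s i • e i := by
  classical
  refine e.repr.injective (lp.ext (funext fun j => ?_))
  simp only [repr_diagonal_apply, map_smul, e.repr_self, lp.coeFn_smul, Pi.smul_apply,
    lp.single_apply, smul_eq_mul]
  rcases eq_or_ne j i with rfl | h <;> simp [*]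

theorem norm_diagonal_le {s : ι → 𝕜} {hs : BddAbove (Set.range fun i => ‖s i‖)} {C : ℝ}
    (hC0 : 0 ≤ C) (hC : ∀ i, ‖s i‖ ≤ C) : ‖e.diagonal s hs‖ ≤ C :=
  opNorm_le_bound _ hC0 fun x =>
    (e.repr.symm.norm_map _).trans_le (lp.norm_mul_le hC0 hC (e.repr x) _ |>.trans_eq
      (by rw [e.repr.norm_map]))

theorem isSelfAdjoint_diagonal [CompleteSpace E] {s : ι → 𝕜}
    {hs : BddAbove (Set.range fun i => ‖s i‖)} (h : ∀ i, conj (s i) = s i) :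
    IsSelfAdjoint (e.diagonal s hs) := by
  rw [ContinuousLinearMap.isSelfAdjoint_iff_isSymmetric]
  intro x y
  rw [← e.repr.inner_map_map, ← e.repr.inner_map_map x, lp.inner_eq_tsum, lp.inner_eq_tsum]
  congr 1; ext i
  simp only [coe_coe, repr_diagonal_apply, RCLike.inner_apply, map_mul, h]
  ring

theorem opNorm_le_of_apply_basis_eq_smul {A : E →L[𝕜] E} {a : ι → 𝕜} {C : ℝ} (hC0 : 0 ≤ C)
    (hA : ∀ i, A (e i) = a i • e i) (ha : ∀ i, ‖a i‖ ≤ C) : ‖A‖ ≤ C := by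
  have hbdd : BddAbove (Set.range fun i => ‖a i‖) := ⟨C, by rintro _ ⟨i, rfl⟩; exact ha i⟩
  rw [e.ext_continuousLinearMap (A := A) (B := e.diagonal a hbdd) fun i => by
    rw [hA, diagonal_apply_basis]]
  exact e.norm_diagonal_le hC0 ha

theorem spectrum_finite_of_forall_mem_or_apply_eq_smul {T : E →L[𝕜] E} {V : Submodule 𝕜 E}
    [FiniteDimensional 𝕜 V] (hV : ∀ x ∈ V, T x ∈ V) {S : Finset 𝕜}
    (he : ∀ i, e i ∈ V ∨ ∃ μ ∈ S, T (e i) = μ • e i) : (spectrum 𝕜 T).Finite := by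
  set pV := ((T : Module.End 𝕜 E).restrict hV).charpoly
  set pS := ∏ μ ∈ S, (X - C μ)
  have hmonic : (pS * pV).Monic :=
    (monic_prod_of_monic _ _ fun μ _ => monic_X_sub_C μ).mul (LinearMap.charpoly_monic _)
  refine spectrum_finite_of_aeval_eq_zero hmonic.ne_zero (e.ext_continuousLinearMap fun i => ?_)
  rw [zero_apply, ← aeval_toLinearMap_apply]
  rcases he i with hi | ⟨μ, hμ, hTi⟩
  · rw [aeval_mul, Module.End.mul_apply,
      Module.End.aeval_charpoly_restrict_apply_of_mem hV hi, map_zero]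
  · rw [Module.End.aeval_apply_of_mem_apply_eq_smul hTi, eval_mul, eval_prod,
      Finset.prod_eq_zero hμ (by simp), zero_mul, zero_smul]

end Diagonal

section PartialProj

variable {𝕜 E : Type*} [RCLike 𝕜] [NormedAddCommGroup E] [InnerProductSpace 𝕜 E]
  (e : HilbertBasis ℕ 𝕜 E)

instance finiteDimensional_span_image_Iio (n : ℕ) :
    FiniteDimensional 𝕜 (Submodule.span 𝕜 (e '' Set.Iio n)) :=
  FiniteDimensional.span_of_finite 𝕜 ((Set.finite_Iio n).image e)

/-- The projection `F_n = E_1 + ⋯ + E_n` of the paper; here the basis is indexed from `0`. -/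
noncomputable def partialProj (n : ℕ) : E →L[𝕜] E :=
  (Submodule.span 𝕜 (e '' Set.Iio n)).starProjection

theorem partialProj_apply_mem (n : ℕ) (x : E) :
    e.partialProj n x ∈ Submodule.span 𝕜 (e '' Set.Iio n) :=
  Submodule.starProjection_apply_mem _ x

theorem partialProj_apply_basis_of_lt {n k : ℕ} (h : k < n) : e.partialProj n (e k) = e k :=
  Submodule.starProjection_eq_self_iff.2 (Submodule.subset_span ⟨k, h, rfl⟩)

theorem partialProj_apply_basis_of_le {n k : ℕ} (h : n ≤ k) : e.partialProj n (e k) = 0 := by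
  refine (Submodule.starProjection_apply_eq_zero_iff _).2 <|
    Submodule.isOrtho_iff_le.1 (Submodule.isOrtho_span.2 ?_) (Submodule.mem_span_singleton_self _)
  rintro _ rfl _ ⟨j, hj, rfl⟩
  exact e.orthonormal.2 (by simp at hj; omega)

theorem isSelfAdjoint_partialProj [CompleteSpace E] (n : ℕ) : IsSelfAdjoint (e.partialProj n) :=
  isSelfAdjoint_starProjection _

theorem norm_partialProj_le (n : ℕ) : ‖e.partialProj n‖ ≤ 1 :=
  Submodule.starProjection_norm_le _

theorem norm_one_sub_partialProj_le (n : ℕ) : ‖1 - e.partialProj n‖ ≤ 1 := by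
  rw [partialProj, ← Submodule.starProjection_orthogonal']
  exact Submodule.starProjection_norm_le _

theorem isCompactOperator_partialProj (n : ℕ) : IsCompactOperator (e.partialProj n) :=
  (isCompactOperator_of_locallyCompactSpace_dom
    (Submodule.span 𝕜 (e '' Set.Iio n)).orthogonalProjectionOnto).clm_comp (Submodule.subtypeL _)

theorem tendsto_partialProj_apply (x : E) :
    Tendsto (fun n => e.partialProj n x) atTop (𝓝 x) := by
  refine Submodule.starProjection_tendsto_self _
    (fun m n h => Submodule.span_mono (Set.image_mono (Set.Iio_subset_Iio h))) x ?_
  rw [← Submodule.span_iUnion, ← Set.image_iUnion, Set.iUnion_Iio, Set.image_univ, e.dense_span]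

theorem norm_apply_basis_le_of_le (K : E →L[𝕜] E) {n k : ℕ} (h : n ≤ k) :
    ‖K (e k)‖ ≤ ‖K * (1 - e.partialProj n)‖ := by
  simpa [e.partialProj_apply_basis_of_le h, e.orthonormal.1 k] using
    (K * (1 - e.partialProj n)).le_opNorm (e k)

theorem exists_norm_mul_one_sub_partialProj_lt [CompleteSpace E] {K : E →L[𝕜] E}
    (hK : IsCompactOperator K) {δ : ℝ} (hδ : 0 < δ) :
    ∃ n, ‖(1 - e.partialProj n) * K‖ < δ ∧ ‖K * (1 - e.partialProj n)‖ < δ := by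
  have hQ : ∀ y, Tendsto (fun n => (1 - e.partialProj n) y) atTop (𝓝 0) := fun y => by
    simpa using (tendsto_const_nhds (x := y)).sub (e.tendsto_partialProj_apply y)
  have hleft := hK.tendsto_comp_of_tendsto_apply e.norm_one_sub_partialProj_le hQ
  have hKK := IsCompactOperator.tendsto_comp_of_tendsto_apply (K := adjoint K ∘L K)
    (by exact hK.clm_comp (adjoint K)) e.norm_one_sub_partialProj_le hQ
  -- the C*-identity reduces the right tail of `K` to the left tail of the compact `K* K`
  have hright : Tendsto (fun n => K * (1 - e.partialProj n)) atTop (𝓝 0) := by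
    refine squeeze_zero_norm (fun n => ?_) (by simpa using hKK.norm.sqrt)
    rw [Real.le_sqrt (norm_nonneg _) (norm_nonneg _)]
    exact norm_mul_sq_le_of_isSelfAdjoint
      ((IsSelfAdjoint.one _).sub (e.isSelfAdjoint_partialProj n)) (e.norm_one_sub_partialProj_le n)
  exact ((NormedAddGroup.tendsto_nhds_zero.1 hleft δ hδ).and
    (NormedAddGroup.tendsto_nhds_zero.1 hright δ hδ)).exists

end PartialProj

end HilbertBasis

section DplusK

variable {E : Type*} [NormedAddCommGroup E] [InnerProductSpace ℂ E]

theorem IsDiagonal.apply_basis {e : HilbertBasis ℕ ℂ E} {D : E →L[ℂ] E} (hD : IsDiagonal e D)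
    (k : ℕ) : D (e k) = ⟪e k, D (e k)⟫_ℂ • e k := by
  rw [← e.repr_apply_apply]
  exact (e.hasSum_repr (D (e k))).unique
    (hasSum_single k fun j hj => by rw [e.repr_apply_apply, hD k j hj.symm, zero_smul])

theorem isDiagonal_of_apply_basis {e : HilbertBasis ℕ ℂ E} {A : E →L[ℂ] E} {a : ℕ → ℂ}
    (hA : ∀ k, A (e k) = a k • e k) : IsDiagonal e A := fun n m hnm => by
  rw [hA, inner_smul_right, e.orthonormal.2 hnm.symm, mul_zero]

theorem abs_im_inner_le_of_isSelfAdjoint_add [CompleteSpace E] {D K : E →L[ℂ] E}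
    (hT : IsSelfAdjoint (D + K)) {x : E} (hx : ‖x‖ = 1) : |(⟪x, D x⟫_ℂ).im| ≤ ‖K x‖ := by
  have him : (⟪x, D x⟫_ℂ).im = -(⟪x, K x⟫_ℂ).im := by
    have := (isSelfAdjoint_iff_isSymmetric.1 hT).im_inner_self_apply x
    simp only [coe_coe, add_apply, inner_add_right, RCLike.im_to_complex, Complex.add_im] at this
    linarith
  calc |(⟪x, D x⟫_ℂ).im| = |(⟪x, K x⟫_ℂ).im| := by rw [him, abs_neg]
    _ ≤ ‖⟪x, K x⟫_ℂ‖ := Complex.abs_im_le_norm _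
    _ ≤ ‖K x‖ := by simpa [hx] using norm_inner_le_norm x (K x)

end DplusK

namespace HilbertBasis

variable {E : Type*} [NormedAddCommGroup E] [InnerProductSpace ℂ E] (e : HilbertBasis ℕ ℂ E)

theorem finite_range_gridRound_inner (T : E →L[ℂ] E) {δ : ℝ} (hδ : 0 < δ) :
    (Set.range fun k => gridRound δ ⟪e k, T (e k)⟫_ℂ).Finite :=
  (finite_image_gridRound hδ Metric.isBounded_closedBall).subset <| Set.range_subset_iff.2 fun k =>
    ⟨_, mem_closedBall_zero_iff.2 (e.norm_inner_apply_basis_le T k), rfl⟩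

variable {s : ℕ → ℂ} (hs : (Set.range s).Finite)

noncomputable def compressAddDiagonal (T : E →L[ℂ] E) (n : ℕ) : E →L[ℂ] E :=
  e.partialProj n * T * e.partialProj n +
    e.diagonal ((Set.Ici n).indicator s)
      (((hs.range_indicator _).image _).bddAbove.mono (Set.range_comp _ _).subset)

variable {hs} {n : ℕ}

theorem compressAddDiagonal_apply_basis_of_lt (T : E →L[ℂ] E) {k : ℕ} (h : k < n) :
    e.compressAddDiagonal hs T n (e k) = e.partialProj n (T (e k)) := by
  simp [compressAddDiagonal, e.partialProj_apply_basis_of_lt h, diagonal_apply_basis,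
    Set.indicator_of_notMem (show k ∉ Set.Ici n by simpa using h)]

theorem compressAddDiagonal_apply_basis_of_le (T : E →L[ℂ] E) {k : ℕ} (h : n ≤ k) :
    e.compressAddDiagonal hs T n (e k) = s k • e k := by
  simp [compressAddDiagonal, e.partialProj_apply_basis_of_le h, diagonal_apply_basis,
    Set.indicator_of_mem (Set.mem_Ici.2 h)]

theorem compressAddDiagonal_mem_dplusK (T : E →L[ℂ] E) :
    e.compressAddDiagonal hs T n ∈ DplusK e := by
  refine ⟨_, e.partialProj n * T * e.partialProj n,
    isDiagonal_of_apply_basis fun k => diagonal_apply_basis e k, ?_, add_comm _ _⟩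
  rw [mul_assoc]
  exact (e.isCompactOperator_partialProj n).comp_clm _

theorem spectrum_compressAddDiagonal_finite (T : E →L[ℂ] E) :
    (spectrum ℂ (e.compressAddDiagonal hs T n)).Finite := by
  set V := Submodule.span ℂ (e '' Set.Iio n)
  have hV : V ≤ V.comap (e.compressAddDiagonal hs T n : E →ₗ[ℂ] E) := Submodule.span_le.2 <| by
    rintro _ ⟨k, hk, rfl⟩
    simpa [e.compressAddDiagonal_apply_basis_of_lt (hs := hs) T hk] using
      e.partialProj_apply_mem n _
  refine e.spectrum_finite_of_forall_mem_or_apply_eq_smul (V := V) (fun x hx => hV hx)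
    (S := hs.toFinset) fun k => ?_
  rcases lt_or_ge k n with h | h
  · exact .inl (Submodule.subset_span ⟨k, h, rfl⟩)
  · exact .inr ⟨s k, by simp, e.compressAddDiagonal_apply_basis_of_le T h⟩

theorem norm_sub_compressAddDiagonal_le {D K : E →L[ℂ] E} (hD : IsDiagonal e D) {c : ℝ}
    (hc : 0 ≤ c) (hsD : ∀ k, n ≤ k → ‖⟪e k, D (e k)⟫_ℂ - s k‖ ≤ c) :
    ‖D + K - e.compressAddDiagonal hs (D + K) n‖ ≤
      c + ‖(1 - e.partialProj n) * K‖ + ‖K * (1 - e.partialProj n)‖ := by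
  set F := e.partialProj n
  set B := e.compressAddDiagonal hs (D + K) n - F * (D + K) * F
  have hB : ∀ k, B (e k) = (Set.Ici n).indicator s k • e k := fun k => by
    simp [B, F, compressAddDiagonal, diagonal_apply_basis]
  have hdiag : ‖D - F * D * F - B‖ ≤ c := by
    refine e.opNorm_le_of_apply_basis_eq_smul hc (fun k => ?_) (fun k => ?_)
      (a := (Set.Ici n).indicator fun k => ⟪e k, D (e k)⟫_ℂ - s k)
    · obtain hDk := hD.apply_basis k
      set d := ⟪e k, D (e k)⟫_ℂ
      rcases lt_or_ge k n with h | h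
      · simp [hB, F, hDk, e.partialProj_apply_basis_of_lt h, show k ∉ Set.Ici n by simpa using h]
      · simp [hB, F, hDk, e.partialProj_apply_basis_of_le h, Set.indicator_of_mem (Set.mem_Ici.2 h),
          sub_smul, e.orthonormal.1 k]
    · by_cases h : k ∈ Set.Ici n
      · simpa [h] using hsD k h
      · simpa [h] using hc
  have hFK : ‖F * (K * (1 - F))‖ ≤ ‖K * (1 - F)‖ :=
    (norm_mul_le _ _).trans (mul_le_of_le_one_left (norm_nonneg _) (e.norm_partialProj_le n))
  calc ‖D + K - e.compressAddDiagonal hs (D + K) n‖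
      = ‖(D - F * D * F - B) + ((1 - F) * K + F * (K * (1 - F)))‖ := by
        congr 1; simp only [B]; noncomm_ring
    _ ≤ c + (‖(1 - F) * K‖ + ‖K * (1 - F)‖) :=
        norm_add_le_of_le hdiag ((norm_add_le _ _).trans (add_le_add le_rfl hFK))
    _ = _ := by ring

theorem isSelfAdjoint_compressAddDiagonal [CompleteSpace E] {T : E →L[ℂ] E}
    (hT : IsSelfAdjoint T) (hs_real : ∀ k, conj (s k) = s k) :
    IsSelfAdjoint (e.compressAddDiagonal hs T n) := by
  refine IsSelfAdjoint.add ?_ (e.isSelfAdjoint_diagonal fun k => ?_)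
  · simpa only [(e.isSelfAdjoint_partialProj n).star_eq] using hT.conjugate (e.partialProj n)
  · by_cases h : k ∈ Set.Ici n <;> simp [h, hs_real]

end HilbertBasis

/-- Elements of `D+K` with finite spectrum are norm dense in `D+K`; moreover self-adjoint elements
with finite spectrum are dense in the self-adjoint part of `D+K` (real rank zero). -/
theorem finite_spectrum_dense (e : HilbertBasis ℕ ℂ H) :
    (∀ T ∈ DplusK e, ∀ ε > (0 : ℝ),
      ∃ T' ∈ DplusK e, (spectrum ℂ T').Finite ∧ ‖T - T'‖ < ε) ∧
    (∀ T ∈ DplusK e, IsSelfAdjoint T → ∀ ε > (0 : ℝ),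
      ∃ T' ∈ DplusK e, IsSelfAdjoint T' ∧ (spectrum ℂ T').Finite ∧ ‖T - T'‖ < ε) := by
  constructor
  · rintro _ ⟨D, K, hD, hK, rfl⟩ ε hε
    have hδ : 0 < ε / 4 := by positivity
    obtain ⟨n, hKl, hKr⟩ := e.exists_norm_mul_one_sub_partialProj_lt hK hδ
    have hs := e.finite_range_gridRound_inner D hδ
    refine ⟨e.compressAddDiagonal hs (D + K) n, e.compressAddDiagonal_mem_dplusK _,
      e.spectrum_compressAddDiagonal_finite _, ?_⟩
    refine (e.norm_sub_compressAddDiagonal_le hD (by positivity) fun k _ =>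
      norm_sub_gridRound_le hδ _).trans_lt ?_
    linarith
  · rintro _ ⟨D, K, hD, hK, rfl⟩ hT ε hε
    have hδ : 0 < ε / 4 := by positivity
    obtain ⟨n, hKl, hKr⟩ := e.exists_norm_mul_one_sub_partialProj_lt hK hδ
    have hs : (Set.range fun k => ((gridRound (ε / 4) ⟪e k, D (e k)⟫_ℂ).re : ℂ)).Finite :=
      Set.range_comp (fun z : ℂ => (z.re : ℂ)) _ ▸ (e.finite_range_gridRound_inner D hδ).image _
    refine ⟨e.compressAddDiagonal hs (D + K) n, e.compressAddDiagonal_mem_dplusK _,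
      e.isSelfAdjoint_compressAddDiagonal hT fun k => Complex.conj_ofReal _,
      e.spectrum_compressAddDiagonal_finite _, ?_⟩
    refine (e.norm_sub_compressAddDiagonal_le hD (by positivity) fun k hk =>
      (norm_sub_re_gridRound_le hδ _).trans <| add_le_add le_rfl <|
        (abs_im_inner_le_of_isSelfAdjoint_add hT (e.orthonormal.1 k)).trans
          (e.norm_apply_basis_le_of_le K hk)).trans_lt ?_
    linarith
end

section
/- There are no proper isometries in D+K: every isometry V ∈ D+K is a unitary operator. Dually, every co-isometry in D+K is unitary. -/
/-!
Write `V = D + K`. Compactness of `K` forces `K eₙ → 0`, so when `V` is an isometry the diagonal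
entries `dₙ = ⟪eₙ, D eₙ⟫` satisfy `‖dₙ‖ ≥ 1/2` for all but finitely many `n`. Replacing `D` by the
identity on the span of the finitely many remaining `eₙ` (a finite-rank change) yields an invertible
diagonal `G` with `V - G` compact. By the Fredholm alternative an injective compact perturbation of
an invertible operator is invertible, and an invertible isometry is unitary. For a co-isometry,
apply this to `V†`, which lies in `D + K` again because adjoints of compact operators are compact.
-/

open scoped InnerProductSpace
open ContinuousLinearMap

variable {H : Type*} [NormedAddCommGroup H] [InnerProductSpace ℂ H] [CompleteSpace H]

open Filter Topology

section Fredholm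

variable {𝕜 X : Type*} [NontriviallyNormedField 𝕜] [NormedAddCommGroup X] [NormedSpace 𝕜 X]
  [CompleteSpace X]

theorem isUnit_of_injective_of_isCompactOperator_sub_one {T : X →L[𝕜] X}
    (hT : IsCompactOperator ⇑(T - 1)) (hinj : Function.Injective T) : IsUnit T := by
  rcases hT.hasEigenvalue_or_mem_resolventSet (neg_ne_zero.2 (one_ne_zero (α := 𝕜))) with h | h
  · obtain ⟨x, hx⟩ := h.exists_hasEigenvector
    exact absurd (hinj (by simpa using hx.apply_eq_smul)) hx.2
  · rw [spectrum.mem_resolventSet_iff] at h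
    simpa using h.neg

theorem isUnit_of_injective_of_isCompactOperator_sub {T G : X →L[𝕜] X} (hG : IsUnit G)
    (hTG : IsCompactOperator ⇑(T - G)) (hinj : Function.Injective T) : IsUnit T := by
  obtain ⟨g, rfl⟩ := hG
  have hA : IsCompactOperator ⇑((↑g⁻¹ : X →L[𝕜] X) * T - 1) := by
    rw [← g.inv_mul, ← mul_sub]
    exact hTG.clm_comp _
  have hginj : Function.Injective (↑g⁻¹ : X →L[𝕜] X) :=
    (isUnit_iff_bijective.1 g⁻¹.isUnit).injective
  simpa using g.isUnit.mul
    (isUnit_of_injective_of_isCompactOperator_sub_one hA (hginj.comp hinj))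

end Fredholm

section InnerProductSpace

variable {𝕜 E F ι : Type*} [RCLike 𝕜] [NormedAddCommGroup E] [InnerProductSpace 𝕜 E]
  [NormedAddCommGroup F] [InnerProductSpace 𝕜 F]

theorem Orthonormal.tendsto_inner_cofinite {v : ι → E} (hv : Orthonormal 𝕜 v) (x : E) :
    Tendsto (fun i => ⟪v i, x⟫_𝕜) cofinite (𝓝 0) := by
  have h := ((hv.inner_products_summable x).tendsto_cofinite_zero).sqrt
  simp only [Real.sqrt_sq (norm_nonneg _), Real.sqrt_zero] at h
  exact tendsto_zero_iff_norm_tendsto_zero.2 h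

theorem Submodule.isCompactOperator_starProjection (U : Submodule 𝕜 E) [FiniteDimensional 𝕜 U] :
    IsCompactOperator U.starProjection :=
  (isCompactOperator_of_locallyCompactSpace_dom U.orthogonalProjectionOnto).clm_comp U.subtypeL

variable [CompleteSpace E] [CompleteSpace F]

theorem norm_adjoint_apply_sq_le (K : E →L[𝕜] F) (y : F) :
    ‖adjoint K y‖ ^ 2 ≤ ‖y‖ * ‖K (adjoint K y)‖ := by
  rw [← inner_self_eq_norm_sq (𝕜 := 𝕜), adjoint_inner_left]
  exact (RCLike.re_le_norm _).trans (norm_inner_le_norm _ _)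

theorem IsCompactOperator.adjoint {K : E →L[𝕜] F} (hK : IsCompactOperator K) :
    IsCompactOperator (ContinuousLinearMap.adjoint K) := by
  set A := ContinuousLinearMap.adjoint K
  refine (isCompactOperator_iff_isCompact_closure_image_closedBall (A : F →ₗ[𝕜] E) one_pos).2
    ((totallyBounded_closure.2 ?_).isCompact_of_isClosed isClosed_closure)
  have hKA : TotallyBounded ((K ∘L A) '' Metric.closedBall 0 1) := by
    obtain ⟨C, hC, hsub⟩ := IsCompactOperator.image_closedBall_subset_compact
      (f := (K ∘L A : F →ₗ[𝕜] F)) (hK.comp_clm A) 1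
    exact hC.totallyBounded.subset hsub
  refine Metric.totallyBounded_iff.2 fun ε hε => ?_
  have hε2 : 0 < ε ^ 2 / 2 := by positivity
  obtain ⟨t, hts, ht, hcover⟩ := Metric.finite_approx_of_totallyBounded hKA _ hε2
  choose b hbB hb using fun z : t => hts z.2
  have : Finite t := ht.to_subtype
  refine ⟨Set.range (A ∘ b), Set.finite_range _, ?_⟩
  rintro _ ⟨y, hy, rfl⟩
  obtain ⟨z, hzt, hz⟩ := Set.mem_iUnion₂.1 (hcover ⟨y, hy, rfl⟩)
  refine Set.mem_iUnion₂.2 ⟨A (b ⟨z, hzt⟩), ⟨⟨z, hzt⟩, rfl⟩, ?_⟩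
  have hyb : ‖y - b ⟨z, hzt⟩‖ ≤ 2 := by
    have := norm_sub_le y (b ⟨z, hzt⟩)
    simp only [Metric.mem_closedBall, dist_zero_right] at hy hbB
    linarith [hbB ⟨z, hzt⟩]
  have hsmall : ‖K (A (y - b ⟨z, hzt⟩))‖ < ε ^ 2 / 2 := by
    rw [map_sub, map_sub, ← dist_eq_norm, ← comp_apply, ← comp_apply, hb]
    exact hz
  rw [Metric.mem_ball, dist_eq_norm, coe_coe, ← map_sub, ← sq_lt_sq₀ (norm_nonneg _) hε.le]
  calc ‖A (y - b ⟨z, hzt⟩)‖ ^ 2 ≤ ‖y - b ⟨z, hzt⟩‖ * ‖K (A (y - b ⟨z, hzt⟩))‖ :=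
        norm_adjoint_apply_sq_le K _
    _ ≤ 2 * ‖K (A (y - b ⟨z, hzt⟩))‖ := by gcongr
    _ < ε ^ 2 := by linarith

theorem IsCompactOperator.tendsto_apply_orthonormal {K : E →L[𝕜] F} (hK : IsCompactOperator K)
    {v : ι → E} (hv : Orthonormal 𝕜 v) : Tendsto (fun i => K (v i)) cofinite (𝓝 0) := by
  obtain ⟨C, hC, hsub⟩ :=
    IsCompactOperator.image_closedBall_subset_compact (f := (K : E →ₗ[𝕜] F)) hK 1
  refine hC.tendsto_nhds_of_unique_mapClusterPt
    (Eventually.of_forall fun i => hsub ⟨v i, by simp [hv.1 i], rfl⟩) fun y _ hy => ?_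
  have hcluster : MapClusterPt ⟪y, y⟫_𝕜 cofinite (fun i => ⟪K (v i), y⟫_𝕜) :=
    hy.continuousAt_comp (f := fun z => ⟪z, y⟫_𝕜) (by fun_prop)
  have hlim : Tendsto (fun i => ⟪K (v i), y⟫_𝕜) cofinite (𝓝 0) := by
    simpa only [adjoint_inner_right] using
      hv.tendsto_inner_cofinite (ContinuousLinearMap.adjoint K y)
  exact inner_self_eq_zero.1 (eq_of_nhds_neBot (hcluster.clusterPt.mono hlim))

theorem mem_unitary_of_isUnit_of_norm_map {V : E →L[𝕜] E} (hV : IsUnit V)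
    (hiso : ∀ x, ‖V x‖ = ‖x‖) : V ∈ unitary (E →L[𝕜] E) := by
  obtain ⟨u, rfl⟩ := hV
  have hstar : star (u : E →L[𝕜] E) = ↑u⁻¹ :=
    Units.eq_inv_of_mul_eq_one_right ((norm_map_iff_adjoint_comp_self _).1 hiso)
  rw [Unitary.mem_iff, hstar]
  exact ⟨u.inv_mul, u.mul_inv⟩

end InnerProductSpace

namespace HilbertBasis

variable {𝕜 E ι : Type*} [RCLike 𝕜] [NormedAddCommGroup E] [InnerProductSpace 𝕜 E]
  (e : HilbertBasis ι 𝕜 E) {T : E →L[𝕜] E} {a : ι → 𝕜}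

theorem repr_apply_of_apply_eq_smul (hT : ∀ i, T (e i) = a i • e i) (x : E) (i : ι) :
    e.repr (T x) i = a i * e.repr x i := by
  have h : (innerSL 𝕜 (e i)) ∘L T = a i • innerSL 𝕜 (e i) := by
    refine ContinuousLinearMap.ext_on
      (Submodule.dense_iff_topologicalClosure_eq_top.2 e.dense_span) ?_
    rintro _ ⟨j, rfl⟩
    rcases eq_or_ne i j with rfl | hij
    · simp [hT]
    · simp [hT, e.orthonormal.inner_eq_zero hij]
  simpa [e.repr_apply_apply] using congr($h x)

theorem isUnit_of_apply_eq_smul [CompleteSpace E] (hT : ∀ i, T (e i) = a i • e i) {c : ℝ}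
    (hc : 0 < c) (ha : ∀ i, c ≤ ‖a i‖) : IsUnit T := by
  rw [isUnit_iff_bijective, bijective_iff_dense_range_and_antilipschitz]
  constructor
  · refine eq_top_iff.2 (e.dense_span.symm.le.trans (Submodule.topologicalClosure_mono ?_))
    refine Submodule.span_le.2 ?_
    rintro _ ⟨i, rfl⟩
    refine ⟨(a i)⁻¹ • e i, ?_⟩
    have hai : a i ≠ 0 := norm_pos_iff.1 (hc.trans_le (ha i))
    simp [hT, smul_smul, inv_mul_cancel₀ hai]
  · refine ⟨c⁻¹.toNNReal, T.antilipschitz_of_bound fun x => ?_⟩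
    have hbound : ‖(c : 𝕜) • e.repr x‖ ≤ ‖e.repr (T x)‖ := by
      refine lp.norm_mono two_ne_zero fun i => ?_
      rw [lp.coeFn_smul, Pi.smul_apply, e.repr_apply_of_apply_eq_smul hT, norm_smul, norm_mul,
        RCLike.norm_ofReal, abs_of_pos hc]
      gcongr
      exact ha i
    rw [norm_smul, RCLike.norm_ofReal, abs_of_pos hc, LinearIsometryEquiv.norm_map,
      LinearIsometryEquiv.norm_map] at hbound
    rw [Real.coe_toNNReal _ (inv_pos.2 hc).le, inv_mul_eq_div, le_div_iff₀ hc, mul_comm]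
    exact hbound

end HilbertBasis

namespace IsDiagonal

variable {E : Type*} [NormedAddCommGroup E] [InnerProductSpace ℂ E] {e : HilbertBasis ℕ ℂ E}
  {D : E →L[ℂ] E}

theorem apply_basis_s10 (hD : IsDiagonal e D) (n : ℕ) : D (e n) = ⟪e n, D (e n)⟫_ℂ • e n := by
  refine (e.hasSum_repr (D (e n))).unique ?_
  simpa [e.repr_apply_apply] using
    hasSum_single (f := fun m => ⟪e m, D (e n)⟫_ℂ • e m) n fun m hm => by
      simp [hD n m hm.symm]

theorem adjoint [CompleteSpace E] (hD : IsDiagonal e D) :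
    IsDiagonal e (ContinuousLinearMap.adjoint D) := by
  intro n m hnm
  rw [adjoint_inner_right, ← inner_conj_symm, hD m n hnm.symm, map_zero]

theorem exists_isUnit_isCompactOperator_sub [CompleteSpace E] (hD : IsDiagonal e D) {c : ℝ}
    (hc : 0 < c) (hd : ∀ᶠ n in cofinite, c ≤ ‖⟪e n, D (e n)⟫_ℂ‖) :
    ∃ G : E →L[ℂ] E, IsUnit G ∧ IsCompactOperator ⇑(D - G) := by
  classical
  set S := {n | ¬c ≤ ‖⟪e n, D (e n)⟫_ℂ‖}
  set U := Submodule.span ℂ (e '' S)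
  have : FiniteDimensional ℂ U := FiniteDimensional.span_of_finite ℂ (hd.image e)
  have hP : ∀ n, U.starProjection (e n) = if n ∈ S then e n else 0 := by
    intro n
    split_ifs with hn
    · exact Submodule.starProjection_eq_self_iff.2 (Submodule.subset_span ⟨n, hn, rfl⟩)
    · refine (Submodule.starProjection_apply_eq_zero_iff _).2 ?_
      refine (Submodule.mem_orthogonal _ _).2 fun u hu => ?_
      refine Submodule.span_induction ?_ (by simp)
        (fun x y _ _ hx hy => by simp [inner_add_left, hx, hy])
        (fun a x _ hx => by simp [inner_smul_left, hx]) hu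
      rintro _ ⟨m, hm, rfl⟩
      exact e.orthonormal.inner_eq_zero (ne_of_mem_of_not_mem hm hn)
  refine ⟨D + (1 - D) * U.starProjection, ?_, ?_⟩
  · refine e.isUnit_of_apply_eq_smul (a := fun n => if n ∈ S then 1 else ⟪e n, D (e n)⟫_ℂ)
      (fun n => ?_) (lt_min hc one_pos) fun n => ?_
    · by_cases hn : n ∈ S
      · simp [hP, hn]
      · simpa [hP, hn] using hD.apply_basis_s10 n
    · by_cases hn : n ∈ S
      · simp [hn]
      · simpa [hn] using min_le_left c 1 |>.trans (not_not.1 hn)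
  · rw [sub_add_cancel_left, ← neg_mul]
    exact U.isCompactOperator_starProjection.clm_comp (-(1 - D))

theorem isUnit_add_of_injective [CompleteSpace E] (hD : IsDiagonal e D) {K : E →L[ℂ] E}
    (hK : IsCompactOperator K) {c : ℝ} (hc : 0 < c)
    (hd : ∀ᶠ n in cofinite, c ≤ ‖⟪e n, D (e n)⟫_ℂ‖) (hinj : Function.Injective (D + K)) :
    IsUnit (D + K) := by
  obtain ⟨G, hG, hDG⟩ := hD.exists_isUnit_isCompactOperator_sub hc hd
  refine isUnit_of_injective_of_isCompactOperator_sub hG ?_ hinj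
  rw [add_sub_right_comm]
  exact hDG.add hK

theorem eventually_half_le_norm_inner_of_norm_map [CompleteSpace E] (hD : IsDiagonal e D)
    {K : E →L[ℂ] E} (hK : IsCompactOperator K) (hiso : ∀ x, ‖(D + K) x‖ = ‖x‖) :
    ∀ᶠ n in cofinite, 1 / 2 ≤ ‖⟪e n, D (e n)⟫_ℂ‖ := by
  have hsmall : ∀ᶠ n in cofinite, ‖K (e n)‖ ≤ 1 / 2 :=
    (hK.tendsto_apply_orthonormal e.orthonormal).norm.eventually
      (eventually_le_nhds (by norm_num))
  filter_upwards [hsmall] with n hn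
  have hDn : ‖D (e n)‖ = ‖⟪e n, D (e n)⟫_ℂ‖ := by
    conv_lhs => rw [hD.apply_basis_s10 n]
    rw [norm_smul, e.orthonormal.1 n, mul_one]
  have hVn : ‖(D + K) (e n)‖ = 1 := by rw [hiso, e.orthonormal.1 n]
  have := norm_add_le (D (e n)) (K (e n))
  rw [← add_apply, hVn, hDn] at this
  linarith

end IsDiagonal

section DplusK

variable {E : Type*} [NormedAddCommGroup E] [InnerProductSpace ℂ E] [CompleteSpace E]
  {e : HilbertBasis ℕ ℂ E} {V : E →L[ℂ] E}

theorem adjoint_mem_DplusK (hV : V ∈ DplusK e) : ContinuousLinearMap.adjoint V ∈ DplusK e := by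
  obtain ⟨D, K, hD, hK, rfl⟩ := hV
  exact ⟨_, _, hD.adjoint, hK.adjoint, map_add _ D K⟩

theorem mem_unitary_of_mem_DplusK_of_norm_map (hV : V ∈ DplusK e) (hiso : ∀ x, ‖V x‖ = ‖x‖) :
    V ∈ unitary (E →L[ℂ] E) := by
  obtain ⟨D, K, hD, hK, rfl⟩ := hV
  refine mem_unitary_of_isUnit_of_norm_map ?_ hiso
  exact hD.isUnit_add_of_injective hK one_half_pos
    (hD.eventually_half_le_norm_inner_of_norm_map hK hiso)
    (AddMonoidHomClass.isometry_of_norm _ hiso).injective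

end DplusK

/-- There are no proper isometries in `D+K`: every isometry in `D+K` is unitary, and every
co-isometry in `D+K` is unitary. -/
theorem isometry_in_DplusK_is_unitary (e : HilbertBasis ℕ ℂ H) (V : H →L[ℂ] H)
    (hV : V ∈ DplusK e) :
    ((∀ x : H, ‖V x‖ = ‖x‖) → V ∈ unitary (H →L[ℂ] H)) ∧
    ((∀ x : H, ‖ContinuousLinearMap.adjoint V x‖ = ‖x‖) → V ∈ unitary (H →L[ℂ] H)) := by
  refine ⟨mem_unitary_of_mem_DplusK_of_norm_map hV, fun hiso => ?_⟩
  simpa [star_eq_adjoint] using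
    Unitary.star_mem (mem_unitary_of_mem_DplusK_of_norm_map (adjoint_mem_DplusK hV) hiso)
end
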